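/- Let (X,r) be a non-degenerate set-theoretic solution to the Yang–Baxter equation and k: X → X. Write k_1 = k×id and k_2 = id×k. If k_2 ∘ r = r^{-1} ∘ k_1, or if k_1 ∘ r^{-1} = r ∘ k_2, then k is a reflection of (X,r). -/
import Mathlib


/-- `r × id` acting on triples. -/
def r1map {X : Type*} (r : X × X → X × X) : X × X × X → X × X × X :=
  fun p => ((r (p.1, p.2.1)).1, (r (p.1, p.2.1)).2, p.2.2)

/-- `id × r` acting on triples. -/
def r2map {X : Type*} (r : X × X → X × X) : X × X × X → X × X × X :=
  fun p => (p.1, r p.2)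

/-- `id × k` on pairs. -/
def k2map {X : Type*} (k : X → X) : X × X → X × X := fun p => (p.1, k p.2)

/-- `k × id` on pairs. -/
def k1map {X : Type*} (k : X → X) : X × X → X × X := fun p => (k p.1, p.2)

/-- Proposition 3.3: if k₂r = r⁻¹k₁ or k₁r⁻¹ = rk₂, then k is a reflection. -/
theorem statement11 {X : Type*} (σ τ : X → X ≃ X) (k : X → X)
    (r s : X × X → X × X) (hr : ∀ x y, r (x, y) = (σ x y, τ y x))
    (hs₁ : r ∘ s = id) (hs₂ : s ∘ r = id)
    (hbraid : r1map r ∘ r2map r ∘ r1map r = r2map r ∘ r1map r ∘ r2map r)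
    (h : k2map k ∘ r = s ∘ k1map k ∨ k1map k ∘ s = r ∘ k2map k) :
    r ∘ k2map k ∘ r ∘ k2map k = k2map k ∘ r ∘ k2map k ∘ r := by
  have comm : k1map k ∘ k2map k = k2map k ∘ k1map k := by
    funext p; simp [k1map, k2map]
  have key : r ∘ k2map k ∘ r = k1map k := by
    rcases h with h | h
    · calc r ∘ k2map k ∘ r = r ∘ (k2map k ∘ r) := rfl
        _ = r ∘ (s ∘ k1map k) := by rw [h]
        _ = (r ∘ s) ∘ k1map k := rfl
        _ = k1map k := by rw [hs₁]; rfl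
    · calc r ∘ k2map k ∘ r = (r ∘ k2map k) ∘ r := rfl
        _ = (k1map k ∘ s) ∘ r := by rw [h]
        _ = k1map k ∘ (s ∘ r) := rfl
        _ = k1map k := by rw [hs₂]; rfl
  calc r ∘ k2map k ∘ r ∘ k2map k = (r ∘ k2map k ∘ r) ∘ k2map k := rfl
    _ = k1map k ∘ k2map k := by rw [key]
    _ = k2map k ∘ k1map k := comm
    _ = k2map k ∘ (r ∘ k2map k ∘ r) := by rw [key]
    _ = k2map k ∘ r ∘ k2map k ∘ r := rfl
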